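/- Let G = (X, Y, E) be a finite simple bipartite graph without isolated vertices, and let G' = (X', Y', E') be the bipartite graph with X' = X ∪ {x, x_0}, Y' = Y ∪ {y, y_0} (new vertices distinct from X ∪ Y and from each other) and E' = E ∪ {x_i y : x_i ∈ X} ∪ {y_i x : y_i ∈ Y} ∪ {x_0 y, x y, x y_0}. Then for every integer k, G has a dominating set of cardinality at most k if and only if G' has a co-secure dominating set of cardinality at most k + 2. -/

import Mathlib

/-- `D` is a dominating set of `G`: every vertex outside `D` has a neighbor in `D`. -/
def IsDomSet {V : Type*} (G : SimpleGraph V) (D : Set V) : Prop :=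
  ∀ v ∉ D, ∃ u ∈ D, G.Adj u v

/-- `S` is a co-secure dominating set of `G`. -/
def IsCSDS {V : Type*} (G : SimpleGraph V) (S : Set V) : Prop :=
  IsDomSet G S ∧ ∀ u ∈ S, ∃ v, v ∉ S ∧ G.Adj u v ∧ IsDomSet G (S \ {u} ∪ {v})

/- The bipartite graph `G` has vertex set `X ⊕ Y`.  The constructed graph `G'`
has vertex set `(X ⊕ Fin 2) ⊕ (Y ⊕ Fin 2)`, where on the left side
`Sum.inl (Sum.inr 0)` is the new vertex `x` and `Sum.inl (Sum.inr 1)` is `x₀`,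
and on the right side `Sum.inr (Sum.inr 0)` is `y` and `Sum.inr (Sum.inr 1)` is `y₀`. -/

/-- The edges of `G'`:
`E' = E ∪ {x_i y : x_i ∈ X} ∪ {y_i x : y_i ∈ Y} ∪ {x₀y, xy, xy₀}`. -/
def scbRel {X Y : Type*} (G : SimpleGraph (X ⊕ Y)) :
    ((X ⊕ Fin 2) ⊕ (Y ⊕ Fin 2)) → ((X ⊕ Fin 2) ⊕ (Y ⊕ Fin 2)) → Prop
  | Sum.inl (Sum.inl xi), Sum.inr (Sum.inl yi) => G.Adj (Sum.inl xi) (Sum.inr yi)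
      -- original edges of G
  | Sum.inl (Sum.inl _), Sum.inr (Sum.inr j) => j = 0       -- x_i y for all x_i ∈ X
  | Sum.inl (Sum.inr i), Sum.inr (Sum.inl _) => i = 0       -- y_i x for all y_i ∈ Y
  | Sum.inl (Sum.inr i), Sum.inr (Sum.inr j) =>
      (i = 1 ∧ j = 0) ∨ (i = 0 ∧ j = 0) ∨ (i = 0 ∧ j = 1)   -- x₀y, xy, xy₀
  | _, _ => False

/-- The constructed star convex bipartite graph `G'`. -/
def scbGraph {X Y : Type*} (G : SimpleGraph (X ⊕ Y)) :
    SimpleGraph ((X ⊕ Fin 2) ⊕ (Y ⊕ Fin 2)) :=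
  SimpleGraph.fromRel (scbRel G)

namespace Stmt9Aux

variable {X Y : Type*}

def emb : X ⊕ Y → (X ⊕ Fin 2) ⊕ (Y ⊕ Fin 2)
  | Sum.inl a => Sum.inl (Sum.inl a)
  | Sum.inr b => Sum.inr (Sum.inl b)

def xv : (X ⊕ Fin 2) ⊕ (Y ⊕ Fin 2) := Sum.inl (Sum.inr 0)
def x0 : (X ⊕ Fin 2) ⊕ (Y ⊕ Fin 2) := Sum.inl (Sum.inr 1)
def yv : (X ⊕ Fin 2) ⊕ (Y ⊕ Fin 2) := Sum.inr (Sum.inr 0)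
def y0 : (X ⊕ Fin 2) ⊕ (Y ⊕ Fin 2) := Sum.inr (Sum.inr 1)

lemma emb_inj : Function.Injective (emb : X ⊕ Y → _) := by
  intro a b h
  cases a <;> cases b <;> simp [emb] at h <;> simp [h]

lemma emb_ne_xv (d : X ⊕ Y) : emb d ≠ xv := by cases d <;> simp [emb, xv]
lemma emb_ne_x0 (d : X ⊕ Y) : emb d ≠ x0 := by cases d <;> simp [emb, x0]
lemma emb_ne_yv (d : X ⊕ Y) : emb d ≠ yv := by cases d <;> simp [emb, yv]
lemma emb_ne_y0 (d : X ⊕ Y) : emb d ≠ y0 := by cases d <;> simp [emb, y0]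

lemma xv_ne_yv : (xv : (X ⊕ Fin 2) ⊕ (Y ⊕ Fin 2)) ≠ yv := by simp [xv, yv]
lemma y0_ne_xv : (y0 : (X ⊕ Fin 2) ⊕ (Y ⊕ Fin 2)) ≠ xv := by simp [y0, xv]
lemma x0_ne_yv : (x0 : (X ⊕ Fin 2) ⊕ (Y ⊕ Fin 2)) ≠ yv := by simp [x0, yv]

variable (G : SimpleGraph (X ⊕ Y))

lemma adj_emb_emb (a : X) (b : Y) :
    (scbGraph G).Adj (emb (Sum.inl a)) (emb (Sum.inr b)) ↔ G.Adj (Sum.inl a) (Sum.inr b) := by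
  simp [scbGraph, SimpleGraph.fromRel_adj, emb, scbRel]

lemma adj_embl_yv (a : X) : (scbGraph G).Adj (emb (Sum.inl a)) yv := by
  simp [scbGraph, SimpleGraph.fromRel_adj, emb, yv, scbRel]

lemma adj_xv_embr (b : Y) : (scbGraph G).Adj xv (emb (Sum.inr b)) := by
  simp [scbGraph, SimpleGraph.fromRel_adj, emb, xv, scbRel]

lemma adj_x0_yv : (scbGraph G).Adj (x0 : (X ⊕ Fin 2) ⊕ (Y ⊕ Fin 2)) yv := by
  simp [scbGraph, SimpleGraph.fromRel_adj, x0, yv, scbRel]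

lemma adj_xv_yv : (scbGraph G).Adj (xv : (X ⊕ Fin 2) ⊕ (Y ⊕ Fin 2)) yv := by
  simp [scbGraph, SimpleGraph.fromRel_adj, xv, yv, scbRel]

lemma adj_xv_y0 : (scbGraph G).Adj (xv : (X ⊕ Fin 2) ⊕ (Y ⊕ Fin 2)) y0 := by
  simp [scbGraph, SimpleGraph.fromRel_adj, xv, y0, scbRel]

lemma adj_to_x0 (u : (X ⊕ Fin 2) ⊕ (Y ⊕ Fin 2)) (h : (scbGraph G).Adj u x0) : u = yv := by
  rcases u with (a | i) | (b | j)
  · simp [scbGraph, SimpleGraph.fromRel_adj, x0, scbRel] at h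
  · fin_cases i <;> simp [scbGraph, SimpleGraph.fromRel_adj, x0, scbRel] at h
  · simp [scbGraph, SimpleGraph.fromRel_adj, x0, scbRel] at h
  · fin_cases j <;> simp_all [scbGraph, SimpleGraph.fromRel_adj, x0, yv, scbRel]

lemma adj_to_y0 (u : (X ⊕ Fin 2) ⊕ (Y ⊕ Fin 2)) (h : (scbGraph G).Adj u y0) : u = xv := by
  rcases u with (a | i) | (b | j)
  · simp [scbGraph, SimpleGraph.fromRel_adj, y0, scbRel] at h
  · fin_cases i <;> simp_all [scbGraph, SimpleGraph.fromRel_adj, y0, xv, scbRel]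
  · simp [scbGraph, SimpleGraph.fromRel_adj, y0, scbRel] at h
  · fin_cases j <;> simp_all [scbGraph, SimpleGraph.fromRel_adj, y0, xv, scbRel]

lemma adj_to_embl (a : X) (u : (X ⊕ Fin 2) ⊕ (Y ⊕ Fin 2))
    (h : (scbGraph G).Adj u (emb (Sum.inl a))) :
    u = yv ∨ ∃ b : Y, u = emb (Sum.inr b) ∧ G.Adj (Sum.inl a) (Sum.inr b) := by
  rcases u with (a' | i) | (b | j)
  · simp [scbGraph, SimpleGraph.fromRel_adj, emb, scbRel] at h
  · simp [scbGraph, SimpleGraph.fromRel_adj, emb, scbRel] at h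
  · right; refine ⟨b, rfl, ?_⟩
    simpa [scbGraph, SimpleGraph.fromRel_adj, emb, scbRel] using h
  · fin_cases j <;> simp_all [scbGraph, SimpleGraph.fromRel_adj, emb, yv, scbRel]

lemma adj_to_embr (b : Y) (u : (X ⊕ Fin 2) ⊕ (Y ⊕ Fin 2))
    (h : (scbGraph G).Adj u (emb (Sum.inr b))) :
    u = xv ∨ ∃ a : X, u = emb (Sum.inl a) ∧ G.Adj (Sum.inl a) (Sum.inr b) := by
  rcases u with (a | i) | (b' | j)
  · right; refine ⟨a, rfl, ?_⟩
    simpa [scbGraph, SimpleGraph.fromRel_adj, emb, scbRel] using h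
  · fin_cases i <;> simp_all [scbGraph, SimpleGraph.fromRel_adj, emb, xv, scbRel]
  · simp [scbGraph, SimpleGraph.fromRel_adj, emb, scbRel] at h
  · simp [scbGraph, SimpleGraph.fromRel_adj, emb, scbRel] at h

lemma adj_from_xv (u : (X ⊕ Fin 2) ⊕ (Y ⊕ Fin 2)) (h : (scbGraph G).Adj xv u) :
    u = yv ∨ u = y0 ∨ ∃ b : Y, u = emb (Sum.inr b) := by
  rcases u with (a | i) | (b | j)
  · simp [scbGraph, SimpleGraph.fromRel_adj, xv, scbRel] at h
  · fin_cases i <;> simp_all [scbGraph, SimpleGraph.fromRel_adj, xv, scbRel]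
  · right; right; exact ⟨b, rfl⟩
  · fin_cases j <;> simp_all [scbGraph, SimpleGraph.fromRel_adj, xv, yv, y0, scbRel]

lemma adj_from_yv (u : (X ⊕ Fin 2) ⊕ (Y ⊕ Fin 2)) (h : (scbGraph G).Adj yv u) :
    u = xv ∨ u = x0 ∨ ∃ a : X, u = emb (Sum.inl a) := by
  rcases u with (a | i) | (b | j)
  · right; right; exact ⟨a, rfl⟩
  · fin_cases i <;> simp_all [scbGraph, SimpleGraph.fromRel_adj, yv, xv, x0, scbRel]
  · simp [scbGraph, SimpleGraph.fromRel_adj, yv, scbRel] at h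
  · fin_cases j <;> simp_all [scbGraph, SimpleGraph.fromRel_adj, yv, scbRel]

/-- Any set containing both `x` and `y` dominates `G'`. -/
lemma dom_univ (T : Set ((X ⊕ Fin 2) ⊕ (Y ⊕ Fin 2))) (hx : xv ∈ T) (hy : yv ∈ T) :
    IsDomSet (scbGraph G) T := by
  intro t ht
  rcases t with (a | i) | (b | j)
  · exact ⟨yv, hy, (adj_embl_yv G a).symm⟩
  · fin_cases i
    · exact absurd hx ht
    · exact ⟨yv, hy, (adj_x0_yv G).symm⟩
  · exact ⟨xv, hx, adj_xv_embr G b⟩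
  · fin_cases j
    · exact absurd hy ht
    · exact ⟨xv, hx, adj_xv_y0 G⟩

lemma dom_left (hbip2 : ∀ y y' : Y, ¬ G.Adj (Sum.inr y) (Sum.inr y'))
    (D0 : Set (X ⊕ Y)) (hD : IsDomSet G D0) (T : Set ((X ⊕ Fin 2) ⊕ (Y ⊕ Fin 2)))
    (hy : yv ∈ T) (hy0 : y0 ∈ T) (hemb : ∀ d ∈ D0, emb d ∈ T) :
    IsDomSet (scbGraph G) T := by
  intro t ht
  rcases t with (a | i) | (b | j)
  · exact ⟨yv, hy, (adj_embl_yv G a).symm⟩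
  · fin_cases i
    · exact ⟨yv, hy, (adj_xv_yv G).symm⟩
    · exact ⟨yv, hy, (adj_x0_yv G).symm⟩
  · have hb : Sum.inr b ∉ D0 := fun h => ht (hemb _ h)
    obtain ⟨s, hs, hadj⟩ := hD _ hb
    rcases s with a' | b'
    · exact ⟨emb (Sum.inl a'), hemb _ hs, (adj_emb_emb G a' b).mpr hadj⟩
    · exact absurd hadj (hbip2 b' b)
  · fin_cases j
    · exact absurd hy ht
    · exact absurd hy0 ht

lemma dom_right (hbip1 : ∀ x x' : X, ¬ G.Adj (Sum.inl x) (Sum.inl x'))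
    (D0 : Set (X ⊕ Y)) (hD : IsDomSet G D0) (T : Set ((X ⊕ Fin 2) ⊕ (Y ⊕ Fin 2)))
    (hx : xv ∈ T) (hx0 : x0 ∈ T) (hemb : ∀ d ∈ D0, emb d ∈ T) :
    IsDomSet (scbGraph G) T := by
  intro t ht
  rcases t with (a | i) | (b | j)
  · have ha : Sum.inl a ∉ D0 := fun h => ht (hemb _ h)
    obtain ⟨s, hs, hadj⟩ := hD _ ha
    rcases s with a' | b'
    · exact absurd hadj (hbip1 a' a)
    · exact ⟨emb (Sum.inr b'), hemb _ hs, ((adj_emb_emb G a b').mpr hadj.symm).symm⟩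
  · fin_cases i
    · exact absurd hx ht
    · exact absurd hx0 ht
  · exact ⟨xv, hx, adj_xv_embr G b⟩
  · fin_cases j
    · exact ⟨xv, hx, adj_xv_yv G⟩
    · exact ⟨xv, hx, adj_xv_y0 G⟩

/-- From any dominating set one can extract one of no larger size in which every
vertex has a neighbour outside the set. -/
lemma exists_min_dom [Fintype X] [Fintype Y]
    (hiso : ∀ v : X ⊕ Y, ∃ u : X ⊕ Y, G.Adj v u)
    (D : Set (X ⊕ Y)) (hD : IsDomSet G D) :
    ∃ D0, IsDomSet G D0 ∧ D0.ncard ≤ D.ncard ∧ ∀ u ∈ D0, ∃ w, w ∉ D0 ∧ G.Adj u w := by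
  classical
  have hex : ∃ n, ∃ E, IsDomSet G E ∧ E.ncard = n := ⟨D.ncard, D, hD, rfl⟩
  obtain ⟨E, hEdom, hEn⟩ := Nat.find_spec hex
  refine ⟨E, hEdom, ?_, ?_⟩
  · rw [hEn]; exact Nat.find_min' hex ⟨D, hD, rfl⟩
  · intro u hu
    by_contra hcon
    push_neg at hcon
    have hcon' : ∀ w, G.Adj u w → w ∈ E := by
      intro w hw
      by_contra h
      exact (hcon w h) hw
    have hdom' : IsDomSet G (E \ {u}) := by
      intro v hv
      by_cases hvu : v = u
      · obtain ⟨w, hw⟩ := hiso u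
        refine ⟨w, ⟨hcon' w hw, ?_⟩, hvu ▸ hw.symm⟩
        simp only [Set.mem_singleton_iff]
        rintro rfl
        exact G.irrefl hw
      · have hvE : v ∉ E := by
          intro h
          exact hv ⟨h, by simpa using hvu⟩
        obtain ⟨s, hs, hadj⟩ := hEdom v hvE
        have hsu : s ≠ u := by
          rintro rfl
          exact hvE (hcon' v hadj)
        exact ⟨s, ⟨hs, by simpa using hsu⟩, hadj⟩
    have hlt : (E \ {u}).ncard < E.ncard :=
      Set.ncard_diff_singleton_lt_of_mem hu (Set.toFinite E)
    exact Nat.find_min hex (hEn ▸ hlt) ⟨E \ {u}, hdom', rfl⟩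

end Stmt9Aux

open Stmt9Aux in
theorem stmt9 {X Y : Type*} [Fintype X] [Fintype Y] (G : SimpleGraph (X ⊕ Y))
    (hbip : (∀ x x' : X, ¬ G.Adj (Sum.inl x) (Sum.inl x')) ∧
            (∀ y y' : Y, ¬ G.Adj (Sum.inr y) (Sum.inr y')))
    (hiso : ∀ v : X ⊕ Y, ∃ u : X ⊕ Y, G.Adj v u) (k : ℕ) :
    (∃ D : Set (X ⊕ Y), IsDomSet G D ∧ D.ncard ≤ k) ↔
    (∃ S : Set ((X ⊕ Fin 2) ⊕ (Y ⊕ Fin 2)),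
      IsCSDS (scbGraph G) S ∧ S.ncard ≤ k + 2) := by
  classical
  constructor
  · rintro ⟨D, hD, hDk⟩
    obtain ⟨D0, hdom0, hcard0, hmin⟩ := exists_min_dom G hiso D hD
    refine ⟨emb '' D0 ∪ {xv, yv}, ⟨?_, ?_⟩, ?_⟩
    · exact dom_univ G _ (Or.inr (by simp)) (Or.inr (by simp))
    · intro u hu
      rcases hu with ⟨d, hd, rfl⟩ | hu
      · -- u = emb d : replace by a neighbour outside D0
        obtain ⟨w, hw, hadj⟩ := hmin d hd
        refine ⟨emb w, ?_, ?_, dom_univ G _ ?_ ?_⟩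
        · rintro (⟨d', hd', he⟩ | he)
          · exact hw (emb_inj he ▸ hd')
          · simp only [Set.mem_insert_iff, Set.mem_singleton_iff] at he
            rcases he with he | he
            · exact emb_ne_xv w he
            · exact emb_ne_yv w he
        · rcases d with a | b
          · rcases w with a' | b'
            · exact absurd hadj (hbip.1 a a')
            · exact (adj_emb_emb G a b').mpr hadj
          · rcases w with a' | b'
            · exact ((adj_emb_emb G a' b).mpr hadj.symm).symm
            · exact absurd hadj (hbip.2 b b')
        · exact Or.inl ⟨Or.inr (by simp), fun h => emb_ne_xv d (by simpa using h.symm)⟩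
        · exact Or.inl ⟨Or.inr (by simp), fun h => emb_ne_yv d (by simpa using h.symm)⟩
      · simp only [Set.mem_insert_iff, Set.mem_singleton_iff] at hu
        rcases hu with rfl | rfl
        · -- u = xv, replace by y0
          refine ⟨y0, ?_, adj_xv_y0 G, ?_⟩
          · rintro (⟨d, _, he⟩ | he)
            · exact emb_ne_y0 d he
            · simp only [Set.mem_insert_iff, Set.mem_singleton_iff] at he
              rcases he with he | he
              · exact y0_ne_xv he
              · simp [y0, yv] at he
          · refine dom_left G hbip.2 D0 hdom0 _ ?_ (Or.inr (by simp)) ?_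
            · exact Or.inl ⟨Or.inr (by simp), by simp [xv, yv]⟩
            · intro d hd
              exact Or.inl ⟨Or.inl ⟨d, hd, rfl⟩, fun h => emb_ne_xv d (by simpa using h)⟩
        · -- u = yv, replace by x0
          refine ⟨x0, ?_, (adj_x0_yv G).symm, ?_⟩
          · rintro (⟨d, _, he⟩ | he)
            · exact emb_ne_x0 d he
            · simp only [Set.mem_insert_iff, Set.mem_singleton_iff] at he
              rcases he with he | he
              · simp [x0, xv] at he
              · exact x0_ne_yv he
          · refine dom_right G hbip.1 D0 hdom0 _ ?_ (Or.inr (by simp)) ?_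
            · exact Or.inl ⟨Or.inr (by simp), by simp [xv, yv]⟩
            · intro d hd
              exact Or.inl ⟨Or.inl ⟨d, hd, rfl⟩, fun h => emb_ne_yv d (by simpa using h)⟩
    · calc (emb '' D0 ∪ {xv, yv}).ncard
          ≤ (emb '' D0).ncard + ({xv, yv} : Set _).ncard := Set.ncard_union_le _ _
        _ ≤ k + 2 := by
            rw [Set.ncard_image_of_injective _ emb_inj, Set.ncard_pair xv_ne_yv]
            omega
  · rintro ⟨S, ⟨hdom, hcs⟩, hSk⟩
    set D0 : Set (X ⊕ Y) := {d | emb d ∈ S} with hD0def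
    -- key lemma, Y side
    have keyY : ∃ EY : Set (X ⊕ Y), (∀ e ∈ EY, ∃ b : Y, e = Sum.inr b) ∧
        EY.ncard + 1 ≤ (({y0, xv} : Set _) ∩ S).ncard ∧
        ∀ b : Y, Sum.inr b ∉ D0 → Sum.inr b ∉ EY →
          ∃ a : X, Sum.inl a ∈ D0 ∧ G.Adj (Sum.inl a) (Sum.inr b) := by
      by_cases hxS : xv ∈ S
      · obtain ⟨v, hvS, hadjv, hdomv⟩ := hcs xv hxS
        have hxv_ne_v : xv ≠ v := fun h => hvS (h ▸ hxS)
        have hxv_notin : xv ∉ S \ {xv} ∪ {v} := by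
          rintro (⟨_, h⟩ | h)
          · exact h rfl
          · exact hxv_ne_v h
        rcases adj_from_xv G v hadjv with rfl | rfl | ⟨b0, rfl⟩
        · -- v = yv
          refine ⟨∅, by simp, ?_, ?_⟩
          · have hm : xv ∈ ({y0, xv} : Set _) ∩ S := ⟨by simp, hxS⟩
            simpa using Nat.one_le_of_lt ((Set.ncard_pos (Set.toFinite _)).mpr ⟨xv, hm⟩)
          · intro b hbD0 _
            have hmem : emb (Sum.inr b) ∉ S \ {xv} ∪ {yv} := by
              rintro (⟨h, _⟩ | h)
              · exact hbD0 h
              · exact emb_ne_yv _ h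
            obtain ⟨s, hsmem, hsadj⟩ := hdomv _ hmem
            rcases adj_to_embr G b s hsadj with rfl | ⟨a, rfl, hGa⟩
            · exact absurd hsmem hxv_notin
            · refine ⟨a, ?_, hGa⟩
              rcases hsmem with ⟨h, _⟩ | h
              · exact h
              · exact absurd h (emb_ne_yv _)
        · -- v = y0
          refine ⟨∅, by simp, ?_, ?_⟩
          · have hm : xv ∈ ({y0, xv} : Set _) ∩ S := ⟨by simp, hxS⟩
            simpa using Nat.one_le_of_lt ((Set.ncard_pos (Set.toFinite _)).mpr ⟨xv, hm⟩)
          · intro b hbD0 _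
            have hmem : emb (Sum.inr b) ∉ S \ {xv} ∪ {y0} := by
              rintro (⟨h, _⟩ | h)
              · exact hbD0 h
              · exact emb_ne_y0 _ h
            obtain ⟨s, hsmem, hsadj⟩ := hdomv _ hmem
            rcases adj_to_embr G b s hsadj with rfl | ⟨a, rfl, hGa⟩
            · exact absurd hsmem hxv_notin
            · refine ⟨a, ?_, hGa⟩
              rcases hsmem with ⟨h, _⟩ | h
              · exact h
              · exact absurd h (emb_ne_y0 _)
        · -- v = emb (inr b0)
          have hy0S : y0 ∈ S := by
            by_contra hy0
            have hy0mem : y0 ∉ S \ {xv} ∪ {emb (Sum.inr b0)} := by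
              rintro (⟨h, _⟩ | h)
              · exact hy0 h
              · exact emb_ne_y0 _ h.symm
            obtain ⟨s, hsmem, hsadj⟩ := hdomv _ hy0mem
            exact hxv_notin ((adj_to_y0 G s hsadj) ▸ hsmem)
          refine ⟨{Sum.inr b0}, by simp, ?_, ?_⟩
          · have hsub : ({y0, xv} : Set _) ⊆ ({y0, xv} : Set _) ∩ S := by
              intro z hz
              refine ⟨hz, ?_⟩
              simp only [Set.mem_insert_iff, Set.mem_singleton_iff] at hz
              rcases hz with rfl | rfl
              · exact hy0S
              · exact hxS
            have h2 : (({y0, xv} : Set ((X ⊕ Fin 2) ⊕ (Y ⊕ Fin 2)))).ncard = 2 :=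
              Set.ncard_pair y0_ne_xv
            calc ({Sum.inr b0} : Set (X ⊕ Y)).ncard + 1 = 2 := by simp
              _ = (({y0, xv} : Set _)).ncard := h2.symm
              _ ≤ _ := Set.ncard_le_ncard hsub (Set.toFinite _)
          · intro b hbD0 hbEY
            have hne : (Sum.inr b : X ⊕ Y) ≠ Sum.inr b0 := by simpa using hbEY
            have hmem : emb (Sum.inr b) ∉ S \ {xv} ∪ {emb (Sum.inr b0)} := by
              rintro (⟨h, _⟩ | h)
              · exact hbD0 h
              · exact hne (emb_inj h)
            obtain ⟨s, hsmem, hsadj⟩ := hdomv _ hmem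
            rcases adj_to_embr G b s hsadj with rfl | ⟨a, rfl, hGa⟩
            · exact absurd hsmem hxv_notin
            · refine ⟨a, ?_, hGa⟩
              rcases hsmem with ⟨h, _⟩ | h
              · exact h
              · exact absurd (emb_inj h) (by simp)
      · -- xv ∉ S
        have hy0S : y0 ∈ S := by
          by_contra h
          obtain ⟨s, hs, hadj⟩ := hdom y0 h
          exact hxS ((adj_to_y0 G s hadj) ▸ hs)
        refine ⟨∅, by simp, ?_, ?_⟩
        · have hm : y0 ∈ ({y0, xv} : Set _) ∩ S := ⟨by simp, hy0S⟩
          simpa using Nat.one_le_of_lt ((Set.ncard_pos (Set.toFinite _)).mpr ⟨y0, hm⟩)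
        · intro b hbD0 _
          obtain ⟨s, hsmem, hsadj⟩ := hdom _ hbD0
          rcases adj_to_embr G b s hsadj with rfl | ⟨a, rfl, hGa⟩
          · exact absurd hsmem hxS
          · exact ⟨a, hsmem, hGa⟩
    -- key lemma, X side
    have keyX : ∃ EX : Set (X ⊕ Y), (∀ e ∈ EX, ∃ a : X, e = Sum.inl a) ∧
        EX.ncard + 1 ≤ (({x0, yv} : Set _) ∩ S).ncard ∧
        ∀ a : X, Sum.inl a ∉ D0 → Sum.inl a ∉ EX →
          ∃ b : Y, Sum.inr b ∈ D0 ∧ G.Adj (Sum.inl a) (Sum.inr b) := by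
      by_cases hyS : yv ∈ S
      · obtain ⟨w, hwS, hadjw, hdomw⟩ := hcs yv hyS
        have hyv_ne_w : yv ≠ w := fun h => hwS (h ▸ hyS)
        have hyv_notin : yv ∉ S \ {yv} ∪ {w} := by
          rintro (⟨_, h⟩ | h)
          · exact h rfl
          · exact hyv_ne_w h
        rcases adj_from_yv G w hadjw with rfl | rfl | ⟨a0, rfl⟩
        · -- w = xv
          refine ⟨∅, by simp, ?_, ?_⟩
          · have hm : yv ∈ ({x0, yv} : Set _) ∩ S := ⟨by simp, hyS⟩
            simpa using Nat.one_le_of_lt ((Set.ncard_pos (Set.toFinite _)).mpr ⟨yv, hm⟩)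
          · intro a haD0 _
            have hmem : emb (Sum.inl a) ∉ S \ {yv} ∪ {xv} := by
              rintro (⟨h, _⟩ | h)
              · exact haD0 h
              · exact emb_ne_xv _ h
            obtain ⟨s, hsmem, hsadj⟩ := hdomw _ hmem
            rcases adj_to_embl G a s hsadj with rfl | ⟨b, rfl, hGb⟩
            · exact absurd hsmem hyv_notin
            · refine ⟨b, ?_, hGb⟩
              rcases hsmem with ⟨h, _⟩ | h
              · exact h
              · exact absurd h (emb_ne_xv _)
        · -- w = x0
          refine ⟨∅, by simp, ?_, ?_⟩
          · have hm : yv ∈ ({x0, yv} : Set _) ∩ S := ⟨by simp, hyS⟩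
            simpa using Nat.one_le_of_lt ((Set.ncard_pos (Set.toFinite _)).mpr ⟨yv, hm⟩)
          · intro a haD0 _
            have hmem : emb (Sum.inl a) ∉ S \ {yv} ∪ {x0} := by
              rintro (⟨h, _⟩ | h)
              · exact haD0 h
              · exact emb_ne_x0 _ h
            obtain ⟨s, hsmem, hsadj⟩ := hdomw _ hmem
            rcases adj_to_embl G a s hsadj with rfl | ⟨b, rfl, hGb⟩
            · exact absurd hsmem hyv_notin
            · refine ⟨b, ?_, hGb⟩
              rcases hsmem with ⟨h, _⟩ | h
              · exact h
              · exact absurd h (emb_ne_x0 _)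
        · -- w = emb (inl a0)
          have hx0S : x0 ∈ S := by
            by_contra hx0
            have hx0mem : x0 ∉ S \ {yv} ∪ {emb (Sum.inl a0)} := by
              rintro (⟨h, _⟩ | h)
              · exact hx0 h
              · exact emb_ne_x0 _ h.symm
            obtain ⟨s, hsmem, hsadj⟩ := hdomw _ hx0mem
            exact hyv_notin ((adj_to_x0 G s hsadj) ▸ hsmem)
          refine ⟨{Sum.inl a0}, by simp, ?_, ?_⟩
          · have hsub : ({x0, yv} : Set _) ⊆ ({x0, yv} : Set _) ∩ S := by
              intro z hz
              refine ⟨hz, ?_⟩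
              simp only [Set.mem_insert_iff, Set.mem_singleton_iff] at hz
              rcases hz with rfl | rfl
              · exact hx0S
              · exact hyS
            have h2 : (({x0, yv} : Set ((X ⊕ Fin 2) ⊕ (Y ⊕ Fin 2)))).ncard = 2 :=
              Set.ncard_pair x0_ne_yv
            calc ({Sum.inl a0} : Set (X ⊕ Y)).ncard + 1 = 2 := by simp
              _ = (({x0, yv} : Set _)).ncard := h2.symm
              _ ≤ _ := Set.ncard_le_ncard hsub (Set.toFinite _)
          · intro a haD0 haEX
            have hne : (Sum.inl a : X ⊕ Y) ≠ Sum.inl a0 := by simpa using haEX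
            have hmem : emb (Sum.inl a) ∉ S \ {yv} ∪ {emb (Sum.inl a0)} := by
              rintro (⟨h, _⟩ | h)
              · exact haD0 h
              · exact hne (emb_inj h)
            obtain ⟨s, hsmem, hsadj⟩ := hdomw _ hmem
            rcases adj_to_embl G a s hsadj with rfl | ⟨b, rfl, hGb⟩
            · exact absurd hsmem hyv_notin
            · refine ⟨b, ?_, hGb⟩
              rcases hsmem with ⟨h, _⟩ | h
              · exact h
              · exact absurd (emb_inj h) (by simp)
      · -- yv ∉ S
        have hx0S : x0 ∈ S := by
          by_contra h
          obtain ⟨s, hs, hadj⟩ := hdom x0 h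
          exact hyS ((adj_to_x0 G s hadj) ▸ hs)
        refine ⟨∅, by simp, ?_, ?_⟩
        · have hm : x0 ∈ ({x0, yv} : Set _) ∩ S := ⟨by simp, hx0S⟩
          simpa using Nat.one_le_of_lt ((Set.ncard_pos (Set.toFinite _)).mpr ⟨x0, hm⟩)
        · intro a haD0 _
          obtain ⟨s, hsmem, hsadj⟩ := hdom _ haD0
          rcases adj_to_embl G a s hsadj with rfl | ⟨b, rfl, hGb⟩
          · exact absurd hsmem hyS
          · exact ⟨b, hsmem, hGb⟩
    obtain ⟨EX, hEXshape, hEXcard, hEXdom⟩ := keyX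
    obtain ⟨EY, hEYshape, hEYcard, hEYdom⟩ := keyY
    refine ⟨D0 ∪ EX ∪ EY, ?_, ?_⟩
    · intro d hd
      have hd0 : d ∉ D0 := fun h => hd (Or.inl (Or.inl h))
      have hdX : d ∉ EX := fun h => hd (Or.inl (Or.inr h))
      have hdY : d ∉ EY := fun h => hd (Or.inr h)
      rcases d with a | b
      · obtain ⟨b, hb, hGb⟩ := hEXdom a hd0 hdX
        exact ⟨Sum.inr b, Or.inl (Or.inl hb), hGb.symm⟩
      · obtain ⟨a, ha, hGa⟩ := hEYdom b hd0 hdY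
        exact ⟨Sum.inl a, Or.inl (Or.inl ha), hGa⟩
    · -- cardinality
      have h1 : (D0 ∪ EX ∪ EY).ncard ≤ D0.ncard + EX.ncard + EY.ncard :=
        le_trans (Set.ncard_union_le _ _) (add_le_add_left (Set.ncard_union_le _ _) _)
      set B : Set ((X ⊕ Fin 2) ⊕ (Y ⊕ Fin 2)) := ({x0, yv} : Set _) ∩ S with hBdef
      set C : Set ((X ⊕ Fin 2) ⊕ (Y ⊕ Fin 2)) := ({y0, xv} : Set _) ∩ S with hCdef
      have hAB : Disjoint (emb '' D0) B := by
        rw [Set.disjoint_left]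
        rintro z ⟨d, _, rfl⟩ ⟨hz, _⟩
        simp only [Set.mem_insert_iff, Set.mem_singleton_iff] at hz
        rcases hz with hz | hz
        · exact emb_ne_x0 d hz
        · exact emb_ne_yv d hz
      have hAC : Disjoint (emb '' D0) C := by
        rw [Set.disjoint_left]
        rintro z ⟨d, _, rfl⟩ ⟨hz, _⟩
        simp only [Set.mem_insert_iff, Set.mem_singleton_iff] at hz
        rcases hz with hz | hz
        · exact emb_ne_y0 d hz
        · exact emb_ne_xv d hz
      have hBC : Disjoint B C := by
        rw [Set.disjoint_left]
        rintro z ⟨hz, _⟩ ⟨hz', _⟩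
        simp only [Set.mem_insert_iff, Set.mem_singleton_iff] at hz hz'
        rcases hz with rfl | rfl <;> rcases hz' with h | h <;>
          simp [x0, yv, y0, xv] at h
      have hsub : emb '' D0 ∪ B ∪ C ⊆ S := by
        rintro z ((⟨d, hd, rfl⟩ | ⟨_, h⟩) | ⟨_, h⟩)
        · exact hd
        · exact h
        · exact h
      have hcard : (emb '' D0 ∪ B ∪ C).ncard
          = (emb '' D0).ncard + B.ncard + C.ncard := by
        rw [Set.ncard_union_eq (by
            rw [Set.disjoint_union_left]; exact ⟨hAC, hBC⟩)
            (Set.toFinite _) (Set.toFinite _),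
          Set.ncard_union_eq hAB (Set.toFinite _) (Set.toFinite _)]
      have himg : (emb '' D0).ncard = D0.ncard := Set.ncard_image_of_injective _ emb_inj
      have hle : (emb '' D0 ∪ B ∪ C).ncard ≤ S.ncard :=
        Set.ncard_le_ncard hsub (Set.toFinite _)
      omega
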